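/- arXiv:1405.3013 — 3 statements merged into one kernel-verified Lean document; each statement's English description precedes it below -/
import Mathlib

section
/- The function d(Λ, Λ') := inf{ 1/(1+R) : there exist t, t' ∈ ℝ^d with |t|, |t'| < 1/(1+R) and (Λ − t) ∩ B(0,R) = (Λ' − t') ∩ B(0,R) } defines a metric (in particular it satisfies the triangle inequality and d(Λ,Λ')=0 implies Λ=Λ') on the hull X_{Λ₀} of a Delone set Λ₀ of finite local complexity. -/
open Metric Set Pointwise

noncomputable section

def UniformlyDiscrete {d : ℕ} (Λ : Set (EuclideanSpace ℝ (Fin d))) : Prop :=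
  ∃ r > (0 : ℝ), ∀ c : EuclideanSpace ℝ (Fin d), (Λ ∩ Metric.ball c r).Subsingleton

def RelativelyDense {d : ℕ} (Λ : Set (EuclideanSpace ℝ (Fin d))) : Prop :=
  ∃ R > (0 : ℝ), ∀ c : EuclideanSpace ℝ (Fin d), (Λ ∩ Metric.ball c R).Nonempty

def Delone {d : ℕ} (Λ : Set (EuclideanSpace ℝ (Fin d))) : Prop :=
  UniformlyDiscrete Λ ∧ RelativelyDense Λ

def FiniteLocalComplexity {d : ℕ} (Λ₀ : Set (EuclideanSpace ℝ (Fin d))) : Prop :=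
  ∀ R > (0 : ℝ),
    {P : Set (EuclideanSpace ℝ (Fin d)) |
      ∃ γ ∈ Λ₀, P = ((-γ) +ᵥ Λ₀) ∩ Metric.ball 0 R}.Finite

/-- The hull of `Λ₀`: all point sets each of whose circular patterns occurs
somewhere in `Λ₀`. -/
def Hull {d : ℕ} (Λ₀ : Set (EuclideanSpace ℝ (Fin d))) :
    Set (Set (EuclideanSpace ℝ (Fin d))) :=
  {Λ | ∀ R > (0 : ℝ), ∀ γ ∈ Λ, ∃ γ' ∈ Λ₀,
    ((-γ) +ᵥ Λ) ∩ Metric.ball 0 R = ((-γ') +ᵥ Λ₀) ∩ Metric.ball 0 R}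

/-- The local-topology distance: `Λ, Λ'` are close when, up to small translations
`t, t'`, they agree on a large ball around the origin. (The value `1` is included
as a trivial bound on the infimum.) -/
def localDist {d : ℕ} (Λ Λ' : Set (EuclideanSpace ℝ (Fin d))) : ℝ :=
  sInf (insert 1
    {s : ℝ | ∃ R > (0 : ℝ), s = 1 / (1 + R) ∧
      ∃ t t' : EuclideanSpace ℝ (Fin d), ‖t‖ < 1 / (1 + R) ∧ ‖t'‖ < 1 / (1 + R) ∧
        ((-t) +ᵥ Λ) ∩ Metric.ball 0 R = ((-t') +ᵥ Λ') ∩ Metric.ball 0 R})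

section Aux

variable {d : ℕ}

lemma mem_negVadd (t x : EuclideanSpace ℝ (Fin d)) (Λ : Set (EuclideanSpace ℝ (Fin d))) :
    x ∈ (-t) +ᵥ Λ ↔ t + x ∈ Λ := by
  rw [Set.mem_vadd_set_iff_neg_vadd_mem]; simp [vadd_eq_add]

/-- The set whose infimum is `localDist`. -/
def ldSet (Λ Λ' : Set (EuclideanSpace ℝ (Fin d))) : Set ℝ :=
  insert 1
    {s : ℝ | ∃ R > (0 : ℝ), s = 1 / (1 + R) ∧
      ∃ t t' : EuclideanSpace ℝ (Fin d), ‖t‖ < 1 / (1 + R) ∧ ‖t'‖ < 1 / (1 + R) ∧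
        ((-t) +ᵥ Λ) ∩ Metric.ball 0 R = ((-t') +ᵥ Λ') ∩ Metric.ball 0 R}

lemma localDist_eq (Λ Λ' : Set (EuclideanSpace ℝ (Fin d))) :
    localDist Λ Λ' = sInf (ldSet Λ Λ') := rfl

lemma ldSet_nonneg {Λ Λ' : Set (EuclideanSpace ℝ (Fin d))} :
    ∀ x ∈ ldSet Λ Λ', (0 : ℝ) ≤ x := by
  intro x hx
  rcases Set.mem_insert_iff.1 hx with rfl | ⟨R, hR, rfl, -⟩
  · norm_num
  · have : (0:ℝ) < 1 + R := by linarith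
    positivity

lemma ldSet_bddBelow {Λ Λ' : Set (EuclideanSpace ℝ (Fin d))} : BddBelow (ldSet Λ Λ') :=
  ⟨0, fun x hx => ldSet_nonneg x hx⟩

lemma ldSet_nonempty {Λ Λ' : Set (EuclideanSpace ℝ (Fin d))} : (ldSet Λ Λ').Nonempty :=
  ⟨1, Set.mem_insert _ _⟩

lemma localDist_nonneg (Λ Λ' : Set (EuclideanSpace ℝ (Fin d))) : 0 ≤ localDist Λ Λ' := by
  rw [localDist_eq]; exact le_csInf ldSet_nonempty ldSet_nonneg

lemma localDist_le_one (Λ Λ' : Set (EuclideanSpace ℝ (Fin d))) : localDist Λ Λ' ≤ 1 := by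
  rw [localDist_eq]; exact csInf_le ldSet_bddBelow (Set.mem_insert _ _)

lemma ldSet_comm (Λ Λ' : Set (EuclideanSpace ℝ (Fin d))) : ldSet Λ Λ' = ldSet Λ' Λ := by
  have h : ∀ A B : Set (EuclideanSpace ℝ (Fin d)), ldSet A B ⊆ ldSet B A := by
    intro A B x hx
    rcases Set.mem_insert_iff.1 hx with rfl | ⟨R, hR, hxv, t, t', h1, h2, he⟩
    · exact Set.mem_insert _ _
    · exact Set.mem_insert_of_mem _ ⟨R, hR, hxv, t', t, h2, h1, he.symm⟩
  exact Set.Subset.antisymm (h Λ Λ') (h Λ' Λ)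

lemma localDist_comm (Λ Λ' : Set (EuclideanSpace ℝ (Fin d))) :
    localDist Λ Λ' = localDist Λ' Λ := by
  rw [localDist_eq, localDist_eq, ldSet_comm]

/-- If points of `Λ'` are `r`-separated and `localDist Λ Λ' = 0`, then `Λ ⊆ Λ'`. -/
lemma subset_of_localDist_eq_zero {Λ Λ' : Set (EuclideanSpace ℝ (Fin d))} {r : ℝ}
    (hr : 0 < r) (hsep : ∀ p ∈ Λ', ∀ q ∈ Λ', dist p q < r → p = q)
    (h0 : localDist Λ Λ' = 0) : Λ ⊆ Λ' := by
  intro x hx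
  have hx2 : (0:ℝ) < ‖x‖ + 2 := by positivity
  have claim : ∀ δ : ℝ, 0 < δ → δ ≤ 1 / (‖x‖ + 2) → ∃ y ∈ Λ', dist y x < 2 * δ := by
    intro δ hδ hδle
    have hδ1 : δ < 1 := by
      have : 1 / (‖x‖ + 2) < 1 := by
        rw [div_lt_one hx2]
        have := norm_nonneg x; linarith
      linarith
    have hlt : sInf (ldSet Λ Λ') < δ := by rw [← localDist_eq, h0]; exact hδ
    obtain ⟨e, heA, he⟩ := exists_lt_of_csInf_lt ldSet_nonempty hlt
    rcases Set.mem_insert_iff.1 heA with rfl | ⟨R, hR, heq, t, t', ht, ht', hpat⟩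
    · linarith
    · have h1R : (0:ℝ) < 1 + R := by linarith
      have heδ : 1 / (1 + R) < δ := heq ▸ he
      have hRx : ‖x‖ + 1 < R := by
        have h2 : 1 / (1 + R) < 1 / (‖x‖ + 2) := lt_of_lt_of_le heδ hδle
        have := (div_lt_div_iff₀ h1R hx2).1 h2
        linarith
      have ht2 : ‖t‖ < δ := lt_trans ht heδ
      have ht2' : ‖t'‖ < δ := lt_trans ht' heδ
      have hmem : (x - t) ∈ ((-t) +ᵥ Λ) ∩ Metric.ball 0 R := by
        refine ⟨(mem_negVadd _ _ _).2 ?_, mem_ball_zero_iff.2 ?_⟩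
        · have h : t + (x - t) = x := by abel
          rw [h]; exact hx
        · have := norm_sub_le x t
          linarith
      rw [hpat] at hmem
      refine ⟨t' + (x - t), (mem_negVadd _ _ _).1 hmem.1, ?_⟩
      rw [dist_eq_norm]
      have h : t' + (x - t) - x = t' - t := by abel
      rw [h]
      have := norm_sub_le t' t
      linarith
  have hδ₁pos : 0 < min (1 / (‖x‖ + 2)) (r / 4) := lt_min (by positivity) (by linarith)
  obtain ⟨y, hy, hyx⟩ := claim _ hδ₁pos (min_le_left _ _)
  have key : ∀ η : ℝ, 0 < η → dist y x ≤ 0 + η := by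
    intro η hη
    obtain ⟨z, hz, hzx⟩ := claim (min (min (1 / (‖x‖ + 2)) (r / 4)) (η / 2))
      (lt_min hδ₁pos (by linarith))
      (le_trans (min_le_left _ _) (min_le_left _ _))
    have hyz : y = z := by
      apply hsep y hy z hz
      have h1 := dist_triangle y x z
      have h2 : dist x z = dist z x := dist_comm x z
      have h3 : min (1 / (‖x‖ + 2)) (r / 4) ≤ r / 4 := min_le_right _ _
      have h4 : min (min (1 / (‖x‖ + 2)) (r / 4)) (η / 2) ≤ min (1 / (‖x‖ + 2)) (r / 4) :=
        min_le_left _ _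
      linarith
    rw [hyz]
    have h5 : min (min (1 / (‖x‖ + 2)) (r / 4)) (η / 2) ≤ η / 2 := min_le_right _ _
    linarith
  have hle : dist y x ≤ 0 := le_of_forall_pos_le_add key
  have hyx0 : y = x := by
    have := le_antisymm hle dist_nonneg
    exact dist_eq_zero.1 this
  rwa [← hyx0]

end Aux

/-- `localDist` defines a metric on the hull of a Delone set of finite
local complexity: it is symmetric, satisfies the triangle inequality, and
separates points. -/
theorem stmt3 {d : ℕ} (Λ₀ : Set (EuclideanSpace ℝ (Fin d)))
    (hDelone : Delone Λ₀) (hFLC : FiniteLocalComplexity Λ₀)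
    (Λ Λ' Λ'' : Set (EuclideanSpace ℝ (Fin d)))
    (hΛ : Λ ∈ Hull Λ₀) (hΛ' : Λ' ∈ Hull Λ₀) (hΛ'' : Λ'' ∈ Hull Λ₀) :
    localDist Λ Λ' = localDist Λ' Λ ∧
    localDist Λ Λ'' ≤ localDist Λ Λ' + localDist Λ' Λ'' ∧
    (localDist Λ Λ' = 0 → Λ = Λ') := by
  refine ⟨localDist_comm Λ Λ', ?_, ?_⟩
  · -- triangle inequality
    refine le_of_forall_pos_le_add ?_
    intro ε hε
    rcases le_or_gt 1 (localDist Λ Λ' + localDist Λ' Λ'' + ε) with h1 | h1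
    · exact le_trans (localDist_le_one Λ Λ'') h1
    have ha : sInf (ldSet Λ Λ') < localDist Λ Λ' + ε / 2 := by
      rw [← localDist_eq]; linarith
    have hb : sInf (ldSet Λ' Λ'') < localDist Λ' Λ'' + ε / 2 := by
      rw [← localDist_eq]; linarith
    obtain ⟨e₁, he₁A, he₁lt⟩ := exists_lt_of_csInf_lt ldSet_nonempty ha
    obtain ⟨e₂, he₂A, he₂lt⟩ := exists_lt_of_csInf_lt ldSet_nonempty hb
    have hannn := localDist_nonneg Λ Λ'
    have hbnn := localDist_nonneg Λ' Λ''
    rcases Set.mem_insert_iff.1 he₁A with rfl | ⟨R₁, hR₁, he₁eq, t₁, t₁', ht₁, ht₁', hpat₁⟩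
    · linarith
    rcases Set.mem_insert_iff.1 he₂A with rfl | ⟨R₂, hR₂, he₂eq, t₂, t₂', ht₂, ht₂', hpat₂⟩
    · linarith
    have h1R₁ : (0:ℝ) < 1 + R₁ := by linarith
    have h1R₂ : (0:ℝ) < 1 + R₂ := by linarith
    have he₁pos : 0 < e₁ := by rw [he₁eq]; positivity
    have he₂pos : 0 < e₂ := by rw [he₂eq]; positivity
    have he₁lt1 : e₁ < 1 := by rw [he₁eq, div_lt_one h1R₁]; linarith
    have he₂lt1 : e₂ < 1 := by rw [he₂eq, div_lt_one h1R₂]; linarith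
    have hR₁eq : 1 + R₁ = 1 / e₁ := by rw [he₁eq, one_div_one_div]
    have hR₂eq : 1 + R₂ = 1 / e₂ := by rw [he₂eq, one_div_one_div]
    rw [← he₁eq] at ht₁ ht₁'
    rw [← he₂eq] at ht₂ ht₂'
    obtain ⟨σ, hσdef⟩ : ∃ σ : ℝ, σ = e₁ + e₂ := ⟨_, rfl⟩
    have hσpos : 0 < σ := by rw [hσdef]; positivity
    have hσlt1 : σ < 1 := by
      have : σ = e₁ + e₂ := hσdef
      linarith
    have hσle : σ ≤ localDist Λ Λ' + localDist Λ' Λ'' + ε := by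
      have : σ = e₁ + e₂ := hσdef
      linarith
    obtain ⟨Rn, hRndef⟩ : ∃ Rn : ℝ, Rn = 1 / σ - 1 := ⟨_, rfl⟩
    have hinvσ : 1 < 1 / σ := by rw [lt_div_iff₀ hσpos]; linarith
    have hRnpos : 0 < Rn := by rw [hRndef]; linarith
    have hRnσ : 1 + Rn = 1 / σ := by rw [hRndef]; ring
    have hσRn : σ = 1 / (1 + Rn) := by rw [hRnσ, one_div_one_div]
    obtain ⟨D, hDdef⟩ : ∃ D : EuclideanSpace ℝ (Fin d), D = t₂ - t₁' := ⟨_, rfl⟩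
    obtain ⟨w, hwdef⟩ : ∃ w : EuclideanSpace ℝ (Fin d), w = (e₂ / σ) • D := ⟨_, rfl⟩
    have hDσ : ‖D‖ < σ := by
      rw [hDdef]
      have := norm_sub_le t₂ t₁'
      have hσ : σ = e₁ + e₂ := hσdef
      linarith
    have hwnorm : ‖w‖ = (e₂ / σ) * ‖D‖ := by
      rw [hwdef, norm_smul, Real.norm_eq_abs, abs_of_pos (div_pos he₂pos hσpos)]
    have hw : ‖w‖ < e₂ := by
      rw [hwnorm]
      calc (e₂ / σ) * ‖D‖ < (e₂ / σ) * σ :=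
            mul_lt_mul_of_pos_left hDσ (div_pos he₂pos hσpos)
        _ = e₂ := div_mul_cancel₀ e₂ (ne_of_gt hσpos)
    have hc : e₂ / σ - 1 = -(e₁ / σ) := by
      rw [div_sub_one (ne_of_gt hσpos), neg_div']
      congr 1
      rw [hσdef]; ring
    have hwD_eq : w - D = (-(e₁ / σ)) • D := by
      rw [hwdef, ← hc, sub_smul, one_smul]
    have hwD : ‖w - D‖ < e₁ := by
      rw [hwD_eq, norm_smul, Real.norm_eq_abs, abs_neg, abs_of_pos (div_pos he₁pos hσpos)]
      calc (e₁ / σ) * ‖D‖ < (e₁ / σ) * σ :=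
            mul_lt_mul_of_pos_left hDσ (div_pos he₁pos hσpos)
        _ = e₁ := div_mul_cancel₀ e₁ (ne_of_gt hσpos)
    have hkey₁ : e₂ ≤ 1 / e₁ - 1 / σ := by
      rw [div_sub_div 1 1 (ne_of_gt he₁pos) (ne_of_gt hσpos), le_div_iff₀ (mul_pos he₁pos hσpos)]
      have hx1 : e₁ * σ < σ := mul_lt_of_lt_one_left hσpos he₁lt1
      have hx1' : e₁ * σ < 1 := lt_trans hx1 hσlt1
      have hx2 : e₂ * (e₁ * σ) < e₂ * 1 := mul_lt_mul_of_pos_left hx1' he₂pos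
      have hσ : σ = e₁ + e₂ := hσdef
      linarith
    have hkey₂ : e₁ ≤ 1 / e₂ - 1 / σ := by
      rw [div_sub_div 1 1 (ne_of_gt he₂pos) (ne_of_gt hσpos), le_div_iff₀ (mul_pos he₂pos hσpos)]
      have hx1 : e₂ * σ < σ := mul_lt_of_lt_one_left hσpos he₂lt1
      have hx1' : e₂ * σ < 1 := lt_trans hx1 hσlt1
      have hx2 : e₁ * (e₂ * σ) < e₁ * 1 := mul_lt_mul_of_pos_left hx1' he₁pos
      have hσ : σ = e₁ + e₂ := hσdef
      linarith
    have hrad₁ : Rn + ‖w‖ < R₁ := by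
      have hR : R₁ = 1 / e₁ - 1 := by linarith
      rw [hRndef, hR]; linarith
    have hrad₂ : Rn + ‖w - D‖ < R₂ := by
      have hR : R₂ = 1 / e₂ - 1 := by linarith
      rw [hRndef, hR]; linarith
    obtain ⟨T, hTdef⟩ : ∃ T : EuclideanSpace ℝ (Fin d), T = t₁ + w := ⟨_, rfl⟩
    obtain ⟨T', hT'def⟩ : ∃ T' : EuclideanSpace ℝ (Fin d), T' = t₂' + (w - D) := ⟨_, rfl⟩
    have hT : ‖T‖ < σ := by
      rw [hTdef]
      have := norm_add_le t₁ w
      have hσ : σ = e₁ + e₂ := hσdef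
      linarith
    have hT' : ‖T'‖ < σ := by
      rw [hT'def]
      have := norm_add_le t₂' (w - D)
      have hσ : σ = e₁ + e₂ := hσdef
      linarith
    have hset : ((-T) +ᵥ Λ) ∩ Metric.ball 0 Rn = ((-T') +ᵥ Λ'') ∩ Metric.ball 0 Rn := by
      ext x
      simp only [Set.mem_inter_iff, mem_ball_zero_iff, mem_negVadd]
      constructor
      · rintro ⟨hxΛ, hxn⟩
        have h1 : (x + w) ∈ ((-t₁) +ᵥ Λ) ∩ Metric.ball 0 R₁ := by
          refine ⟨(mem_negVadd _ _ _).2 ?_, mem_ball_zero_iff.2 ?_⟩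
          · have h : t₁ + (x + w) = T + x := by rw [hTdef]; abel
            rw [h]; exact hxΛ
          · have := norm_add_le x w
            linarith
        rw [hpat₁] at h1
        have h2 : (x + (w - D)) ∈ ((-t₂) +ᵥ Λ') ∩ Metric.ball 0 R₂ := by
          refine ⟨(mem_negVadd _ _ _).2 ?_, mem_ball_zero_iff.2 ?_⟩
          · have h : t₂ + (x + (w - D)) = t₁' + (x + w) := by rw [hDdef]; abel
            rw [h]
            exact (mem_negVadd _ _ _).1 h1.1
          · have := norm_add_le x (w - D)
            linarith
        rw [hpat₂] at h2
        refine ⟨?_, hxn⟩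
        have h : T' + x = t₂' + (x + (w - D)) := by rw [hT'def]; abel
        rw [h]
        exact (mem_negVadd _ _ _).1 h2.1
      · rintro ⟨hxΛ'', hxn⟩
        have h2 : (x + (w - D)) ∈ ((-t₂') +ᵥ Λ'') ∩ Metric.ball 0 R₂ := by
          refine ⟨(mem_negVadd _ _ _).2 ?_, mem_ball_zero_iff.2 ?_⟩
          · have h : t₂' + (x + (w - D)) = T' + x := by rw [hT'def]; abel
            rw [h]; exact hxΛ''
          · have := norm_add_le x (w - D)
            linarith
        rw [← hpat₂] at h2
        have h1 : (x + w) ∈ ((-t₁') +ᵥ Λ') ∩ Metric.ball 0 R₁ := by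
          refine ⟨(mem_negVadd _ _ _).2 ?_, mem_ball_zero_iff.2 ?_⟩
          · have h : t₁' + (x + w) = t₂ + (x + (w - D)) := by rw [hDdef]; abel
            rw [h]
            exact (mem_negVadd _ _ _).1 h2.1
          · have := norm_add_le x w
            linarith
        rw [← hpat₁] at h1
        refine ⟨?_, hxn⟩
        have h : T + x = t₁ + (x + w) := by rw [hTdef]; abel
        rw [h]
        exact (mem_negVadd _ _ _).1 h1.1
    have hmem : σ ∈ ldSet Λ Λ'' := by
      refine Set.mem_insert_of_mem _ ⟨Rn, hRnpos, hσRn, T, T', ?_, ?_, hset⟩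
      · rw [← hσRn]; exact hT
      · rw [← hσRn]; exact hT'
    calc localDist Λ Λ'' ≤ σ := by
          rw [localDist_eq]; exact csInf_le ldSet_bddBelow hmem
      _ ≤ localDist Λ Λ' + localDist Λ' Λ'' + ε := hσle
  · -- separation
    intro h0
    obtain ⟨r, hrpos, hdisc⟩ := hDelone.1
    have sepH : ∀ Λ₁ ∈ Hull Λ₀, ∀ p ∈ Λ₁, ∀ q ∈ Λ₁, dist p q < r → p = q := by
      intro Λ₁ hH p hp q hq hpq
      have hd0 : (0:ℝ) ≤ dist p q := dist_nonneg
      obtain ⟨γ', hγ', hEq⟩ := hH (dist p q + 1) (by linarith) p hp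
      have h0m : (0 : EuclideanSpace ℝ (Fin d)) ∈
          ((-p) +ᵥ Λ₁) ∩ Metric.ball 0 (dist p q + 1) := by
        refine ⟨(mem_negVadd _ _ _).2 (by simpa using hp), mem_ball_zero_iff.2 ?_⟩
        simp only [norm_zero]; linarith
      have hqm : (q - p) ∈ ((-p) +ᵥ Λ₁) ∩ Metric.ball 0 (dist p q + 1) := by
        refine ⟨(mem_negVadd _ _ _).2 ?_, mem_ball_zero_iff.2 ?_⟩
        · have h : p + (q - p) = q := by abel
          rw [h]; exact hq
        · have h : ‖q - p‖ = dist q p := (dist_eq_norm q p).symm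
          rw [h, dist_comm]; linarith
      rw [hEq] at h0m hqm
      have hγ0 : γ' ∈ Λ₀ := by
        have := (mem_negVadd _ _ _).1 h0m.1
        simpa using this
      have hγq : γ' + (q - p) ∈ Λ₀ := (mem_negVadd _ _ _).1 hqm.1
      have heq2 : γ' = γ' + (q - p) := by
        apply hdisc γ' ⟨hγ0, mem_ball_self hrpos⟩
        refine ⟨hγq, ?_⟩
        rw [mem_ball, dist_eq_norm]
        have h : γ' + (q - p) - γ' = q - p := by abel
        rw [h]
        have h2 : ‖q - p‖ = dist q p := (dist_eq_norm q p).symm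
        rw [h2, dist_comm]; exact hpq
      have : q - p = 0 := by
        have := left_eq_add.1 heq2
        exact this
      have : q = p := by
        have h := sub_eq_zero.1 this
        exact h
      exact this.symm
    have h0' : localDist Λ' Λ = 0 := by rw [localDist_comm]; exact h0
    exact Set.Subset.antisymm
      (subset_of_localDist_eq_zero hrpos (fun p hp q hq => sepH Λ' hΛ' p hp q hq) h0)
      (subset_of_localDist_eq_zero hrpos (fun p hp q hq => sepH Λ hΛ p hp q hq) h0')
end
end

section
/- Let Λ₀ be a Delone set of ℝ^d and let X_{Λ₀} be its hull. If Λ, Λ' ∈ X_{Λ₀} are strongly regionally proximal, then Λ − Λ' ⊆ (Λ₀ − Λ₀) + (Λ₀ − Λ₀) + (Λ₀ − Λ₀). -/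
open Metric Set Pointwise

/-- Strong regional proximality of `Λ, Λ'` within the hull `X`. -/
def StronglyRegionallyProximal {d : ℕ} (X : Set (Set (EuclideanSpace ℝ (Fin d))))
    (Λ Λ' : Set (EuclideanSpace ℝ (Fin d))) : Prop :=
  ∀ R > (0 : ℝ), ∃ A ∈ X, ∃ B ∈ X, ∃ t : EuclideanSpace ℝ (Fin d),
    Λ ∩ Metric.ball 0 R = A ∩ Metric.ball 0 R ∧
    Λ' ∩ Metric.ball 0 R = B ∩ Metric.ball 0 R ∧
    A ∩ Metric.ball t R = B ∩ Metric.ball t R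

lemma hull_sub_subset {d : ℕ} {Λ₀ A : Set (EuclideanSpace ℝ (Fin d))}
    (hA : A ∈ Hull Λ₀) : A - A ⊆ Λ₀ - Λ₀ := by
  rintro x ⟨u, hu, v, hv, rfl⟩
  obtain ⟨γ', hγ', heq⟩ := hA (‖u - v‖ + 1) (by positivity) v hv
  have hmem : u - v ∈ ((-v) +ᵥ A) ∩ Metric.ball 0 (‖u - v‖ + 1) := by
    refine ⟨⟨u, hu, ?_⟩, ?_⟩
    · simp [vadd_eq_add]; abel
    · simpa using by linarith [norm_nonneg (u - v)]
  rw [heq] at hmem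
  obtain ⟨⟨z, hz, hz2⟩, -⟩ := hmem
  exact ⟨z, hz, γ', hγ', by simpa [vadd_eq_add, sub_eq_neg_add] using hz2⟩

/-- if `Λ, Λ'` in the hull of a Delone set `Λ₀` are strongly
regionally proximal, then `Λ - Λ' ⊆ (Λ₀ - Λ₀) + (Λ₀ - Λ₀) + (Λ₀ - Λ₀)`. -/
theorem stmt5 {d : ℕ} (Λ₀ : Set (EuclideanSpace ℝ (Fin d))) (hDelone : Delone Λ₀)
    (Λ Λ' : Set (EuclideanSpace ℝ (Fin d)))
    (hΛ : Λ ∈ Hull Λ₀) (hΛ' : Λ' ∈ Hull Λ₀)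
    (hsrp : StronglyRegionallyProximal (Hull Λ₀) Λ Λ') :
    Λ - Λ' ⊆ (Λ₀ - Λ₀) + (Λ₀ - Λ₀) + (Λ₀ - Λ₀) := by
  obtain ⟨R₀, hR₀, hdense⟩ := hDelone.2
  rintro x ⟨a, ha, b, hb, rfl⟩
  set R : ℝ := max ‖a‖ ‖b‖ + R₀ + 1 with hR
  have hRpos : (0 : ℝ) < R := by
    have := le_max_left ‖a‖ ‖b‖
    have := norm_nonneg a
    positivity
  obtain ⟨A, hA, B, hB, t, hΛA, hΛB, hAB⟩ := hsrp R hRpos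
  have haA : a ∈ A := by
    have : a ∈ Λ ∩ Metric.ball 0 R := by
      refine ⟨ha, ?_⟩
      simp only [mem_ball, dist_zero_right]
      have := le_max_left ‖a‖ ‖b‖; linarith
    rw [hΛA] at this; exact this.1
  have hbB : b ∈ B := by
    have : b ∈ Λ' ∩ Metric.ball 0 R := by
      refine ⟨hb, ?_⟩
      simp only [mem_ball, dist_zero_right]
      have := le_max_right ‖a‖ ‖b‖; linarith
    rw [hΛB] at this; exact this.1
  -- find p ∈ A ∩ ball t R
  obtain ⟨γ', hγ', heq⟩ := hA (‖t - a‖ + R₀) (by positivity) a haA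
  obtain ⟨q₀, hq₀, hq₀ball⟩ := hdense (γ' + (t - a))
  have hkey : q₀ - γ' ∈ ((-γ') +ᵥ Λ₀) ∩ Metric.ball 0 (‖t - a‖ + R₀) := by
    refine ⟨⟨q₀, hq₀, by simp [vadd_eq_add]; abel⟩, ?_⟩
    simp only [mem_ball, dist_zero_right]
    have h1 : ‖q₀ - γ'‖ ≤ ‖q₀ - (γ' + (t - a))‖ + ‖t - a‖ := by
      have : q₀ - γ' = (q₀ - (γ' + (t - a))) + (t - a) := by abel
      rw [this]; exact norm_add_le _ _
    have h2 : ‖q₀ - (γ' + (t - a))‖ < R₀ := by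
      have := hq₀ball
      simpa [mem_ball, dist_eq_norm] using this
    linarith
  rw [← heq] at hkey
  obtain ⟨⟨p₀, hp₀A, hp₀eq⟩, -⟩ := hkey
  have hp₀ : p₀ = a + (q₀ - γ') := by
    have : -a + p₀ = q₀ - γ' := by simpa [vadd_eq_add] using hp₀eq
    linear_combination (norm := abel) this
  have hpball : p₀ ∈ Metric.ball t R := by
    simp only [mem_ball, dist_eq_norm]
    have : p₀ - t = q₀ - (γ' + (t - a)) := by rw [hp₀]; abel
    rw [this]
    have h2 : ‖q₀ - (γ' + (t - a))‖ < R₀ := by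
      simpa [mem_ball, dist_eq_norm] using hq₀ball
    have h3 : (0:ℝ) ≤ max ‖a‖ ‖b‖ := le_trans (norm_nonneg a) (le_max_left _ _)
    have : R₀ < R := by rw [hR]; linarith
    linarith
  have hpB : p₀ ∈ B := by
    have : p₀ ∈ A ∩ Metric.ball t R := ⟨hp₀A, hpball⟩
    rw [hAB] at this; exact this.1
  -- 0 ∈ Λ₀ - Λ₀
  obtain ⟨z, hz, -⟩ := hdense 0
  have h0 : (0 : EuclideanSpace ℝ (Fin d)) ∈ Λ₀ - Λ₀ := ⟨z, hz, z, hz, sub_self z⟩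
  have h1 : a - p₀ ∈ Λ₀ - Λ₀ := hull_sub_subset hA ⟨a, haA, p₀, hp₀A, rfl⟩
  have h2 : p₀ - b ∈ Λ₀ - Λ₀ := hull_sub_subset hB ⟨p₀, hpB, b, hbB, rfl⟩
  show a - b ∈ _
  have : a - b = (a - p₀) + (p₀ - b) + 0 := by abel
  rw [this]
  exact Set.add_mem_add (Set.add_mem_add h1 h2) h0
end

section
/- Let (X, T) be a minimal dynamical system where T is an Abelian group acting by homeomorphisms on a non-compact locally compact Hausdorff space X, and let X̂ = X ∪ {∞} be the one-point compactification with the extended T-action fixing ∞. Then the constant map sending every point of X̂ to ∞ belongs to the Ellis semigroup E(X̂, T), i.e., it is a pointwise limit of translation maps x ↦ x·t. -/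
/-!
The closure `E` of the translations in `X̂ ^ X̂` is compact, and since translations are
continuous it is closed under composition. As `X` is not compact and every orbit is dense, `∞`
lies in the orbit closure of every point of `X̂`, so by compactness of `E` each point is sent to
`∞` by some element of `E`. All elements of `E` fix `∞`, hence composing these maps yields, for
every finite `F ⊆ X̂`, an element of `E` that is `∞` on `F`; these converge pointwise to the
constant map `∞`.
-/

open Metric Set OnePoint

/-- The extension of the translation `x ↦ t • x` to the one-point
compactification, fixing the point at infinity. -/
def extAct {T X : Type*} [CommGroup T] [MulAction T X] (t : T) :
    OnePoint X → OnePoint X :=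
  OnePoint.map (fun x => t • x)

theorem mem_closure_of_forall_finset_exists_eqOn {ι : Type*} {π : ι → Type*}
    [∀ i, TopologicalSpace (π i)] {E : Set (∀ i, π i)} {f : ∀ i, π i}
    (h : ∀ F : Finset ι, ∃ g ∈ E, ∀ i ∈ F, g i = f i) : f ∈ closure E := by
  refine _root_.mem_closure_iff.mpr fun U hU hfU => ?_
  obtain ⟨I, u, hfu, huU⟩ := isOpen_pi_iff.mp hU f hfU
  obtain ⟨g, hgE, hgf⟩ := h I
  refine ⟨g, huU fun i hi => ?_, hgE⟩
  rw [hgf i hi]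
  exact (hfu i hi).2

section EllisSemigroup

variable {Y : Type*} [TopologicalSpace Y] {S : Set (Y → Y)}

theorem comp_mem_closure_of_mem_of_mem_closure (hcomp : ∀ f ∈ S, ∀ g ∈ S, f ∘ g ∈ S)
    {f p : Y → Y} (hf : f ∈ S) (hfc : Continuous f) (hp : p ∈ closure S) :
    f ∘ p ∈ closure S := by
  have hc : Continuous (f ∘ · : (Y → Y) → Y → Y) :=
    continuous_pi fun y => hfc.comp (continuous_apply y)
  refine closure_mono ?_ (image_closure_subset_closure_image hc (mem_image_of_mem _ hp))
  rintro _ ⟨g, hg, rfl⟩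
  exact hcomp f hf g hg

theorem comp_mem_closure (hcont : ∀ f ∈ S, Continuous f)
    (hcomp : ∀ f ∈ S, ∀ g ∈ S, f ∘ g ∈ S) {p q : Y → Y} (hp : p ∈ closure S)
    (hq : q ∈ closure S) : q ∘ p ∈ closure S := by
  have hc : Continuous (· ∘ p : (Y → Y) → Y → Y) :=
    continuous_pi fun y => continuous_apply (p y)
  have hsub : (· ∘ p) '' S ⊆ closure S := by
    rintro _ ⟨f, hf, rfl⟩
    exact comp_mem_closure_of_mem_of_mem_closure hcomp hf (hcont f hf) hp
  simpa only [closure_closure] using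
    closure_mono hsub (image_closure_subset_closure_image hc (mem_image_of_mem _ hq))

theorem apply_eq_of_mem_closure {c : Y} (hc : IsClosed {c}) (hfix : ∀ f ∈ S, f c = c)
    {p : Y → Y} (hp : p ∈ closure S) : p c = c :=
  closure_minimal (t := (fun f : Y → Y => f c) ⁻¹' {c}) hfix
    (hc.preimage (continuous_apply c)) hp

theorem exists_mem_closure_apply_eq_of_mem_closure_image [CompactSpace Y] {y c : Y}
    (hc : c ∈ closure ((fun f : Y → Y => f y) '' S)) :
    ∃ p ∈ closure S, p y = c :=
  (isClosed_closure.isClosed_image_eval y isClosed_closure.isCompact).closure_subset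
    (closure_mono (image_mono subset_closure) hc)

variable (hcont : ∀ f ∈ S, Continuous f) (hcomp : ∀ f ∈ S, ∀ g ∈ S, f ∘ g ∈ S)
  {c : Y} (hc : IsClosed {c}) (hfix : ∀ f ∈ S, f c = c)
  (horbit : ∀ y, c ∈ closure ((fun f : Y → Y => f y) '' S))
include hcont hcomp hc hfix horbit

theorem exists_mem_closure_forall_mem_finset_apply_eq [CompactSpace Y] (hne : S.Nonempty)
    (F : Finset Y) : ∃ p ∈ closure S, ∀ y ∈ F, p y = c := by
  classical
  induction F using Finset.induction with
  | empty =>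
    obtain ⟨f, hf⟩ := hne
    exact ⟨f, subset_closure hf, by simp⟩
  | insert y F _ ih =>
    obtain ⟨p, hp, hpF⟩ := ih
    obtain ⟨q, hq, hqy⟩ := exists_mem_closure_apply_eq_of_mem_closure_image (horbit (p y))
    refine ⟨q ∘ p, comp_mem_closure hcont hcomp hp hq, fun z hz => ?_⟩
    rcases Finset.mem_insert.mp hz with rfl | hz
    · exact hqy
    · simp only [Function.comp_apply, hpF z hz, apply_eq_of_mem_closure hc hfix hq]

theorem const_mem_closure_of_mem_closure_orbit [CompactSpace Y] (hne : S.Nonempty) :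
    (fun _ => c) ∈ closure S := by
  rw [← closure_closure]
  exact mem_closure_of_forall_finset_exists_eqOn
    (exists_mem_closure_forall_mem_finset_apply_eq hcont hcomp hc hfix horbit hne)

end EllisSemigroup

section ExtAct

variable {T X : Type*} [CommGroup T] [MulAction T X]

theorem continuous_extAct [TopologicalSpace X] [ContinuousConstSMul T X] (t : T) :
    Continuous (extAct (X := X) t) :=
  (Homeomorph.smul t).onePointCongr.continuous

theorem extAct_comp_extAct (t s : T) :
    extAct (X := X) t ∘ extAct s = extAct (t * s) := by
  funext y
  induction y using OnePoint.rec with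
  | infty => rfl
  | coe x => simp [extAct, mul_smul]

theorem infty_mem_closure_range_extAct [TopologicalSpace X] [NoncompactSpace X]
    (hmin : ∀ x : X, Dense (MulAction.orbit T x)) (y : OnePoint X) :
    ∞ ∈ closure (range fun t : T => extAct t y) := by
  induction y using OnePoint.rec with
  | infty => exact subset_closure ⟨1, rfl⟩
  | coe x =>
    refine closure_mono ?_ (denseRange_coe.dense_image continuous_coe (hmin x) ∞)
    rintro _ ⟨_, ⟨t, rfl⟩, rfl⟩
    exact ⟨t, rfl⟩

end ExtAct

theorem stmt6_general {T X : Type*} [CommGroup T] [TopologicalSpace X] (hnc : ¬ CompactSpace X)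
    [MulAction T X] [ContinuousConstSMul T X]
    (hmin : ∀ x : X, Dense (MulAction.orbit T x)) :
    (fun _ : OnePoint X => (∞ : OnePoint X)) ∈
      closure {f : OnePoint X → OnePoint X | ∃ t : T, f = extAct t} := by
  have : NoncompactSpace X := not_compactSpace_iff.mp hnc
  refine const_mem_closure_of_mem_closure_orbit ?_ ?_ isClosed_infty ?_ ?_ ⟨extAct 1, 1, rfl⟩
  · rintro _ ⟨t, rfl⟩
    exact continuous_extAct t
  · rintro _ ⟨t, rfl⟩ _ ⟨s, rfl⟩
    exact ⟨t * s, extAct_comp_extAct t s⟩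
  · rintro _ ⟨t, rfl⟩
    rfl
  · intro y
    convert infty_mem_closure_range_extAct hmin y using 2
    ext z
    simp [eq_comm]

/-- for a minimal action of an Abelian group `T` by homeomorphisms on
a non-compact locally compact Hausdorff space `X`, the constant map to `∞` on the
one-point compactification is a pointwise limit of the (extended) translation maps,
i.e. belongs to the Ellis semigroup `E(X̂, T)`. -/
theorem stmt6 {T X : Type*} [CommGroup T] [TopologicalSpace X] [T2Space X]
    [LocallyCompactSpace X] (hnc : ¬ CompactSpace X)
    [MulAction T X] [ContinuousConstSMul T X]
    (hmin : ∀ x : X, Dense (MulAction.orbit T x)) :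
    (fun _ : OnePoint X => (∞ : OnePoint X)) ∈
      closure {f : OnePoint X → OnePoint X | ∃ t : T, f = extAct t} :=
  stmt6_general hnc hmin
end
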